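/- arXiv:2212.06923 — 3 statements merged into one kernel-verified Lean document; each statement's English description precedes it below -/
import Mathlib

section
/- The velocity RMI Δv := C_iᵀ(v_j − v_i − g Δt) is invariant under the unobservable transformation (C, v) ↦ (C_T C, C_T v) provided C_T g = g, where C_T = Exp((g φ)^∧) is a rotation about the gravity axis g. -/
open Matrix

/-- The velocity RMI `Δv = C_iᵀ(v_j − v_i − g Δt)` is invariant under the
unobservable transformation `(C, v) ↦ (C_T C, C_T v)` provided `C_T g = g`. -/
theorem velocity_rmi_invariant
    (Ci CT : Matrix (Fin 3) (Fin 3) ℝ)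
    (vi vj g : Fin 3 → ℝ) (Δt : ℝ)
    (hCT : CTᵀ * CT = 1) (hg : CT *ᵥ g = g) :
    (CT * Ci)ᵀ *ᵥ (CT *ᵥ vj - CT *ᵥ vi - Δt • g) =
      Ciᵀ *ᵥ (vj - vi - Δt • g) := by
  have h : CT *ᵥ vj - CT *ᵥ vi - Δt • g = CT *ᵥ (vj - vi - Δt • g) := by
    rw [Matrix.mulVec_sub, Matrix.mulVec_sub, Matrix.mulVec_smul, hg]
  rw [h, transpose_mul, ← Matrix.mulVec_mulVec, Matrix.mulVec_mulVec, Matrix.mulVec_mulVec,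
    mul_assoc, hCT, mul_one]
end

section
/- For the SE₂(3)-parameterized direct IMU integration, the one-step error-state Jacobian F = [[I, 0, 0],[T g^∧, I, 0],[½T² g^∧, T·I, I]] (acting on (δφ, δv, δr) ∈ ℝ⁹) maps the null-space matrix N = [[g, 0],[0, 0],[0, I₃]] ∈ ℝ^{9×4} to itself: F N = N. -/
open Matrix

/-- The skew-symmetric matrix `a^∧` of `a ∈ ℝ³`. -/
def hat (a : Fin 3 → ℝ) : Matrix (Fin 3) (Fin 3) ℝ :=
  !![0, -a 2, a 1; a 2, 0, -a 0; -a 1, a 0, 0]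

/-- The one-step error-state Jacobian
`F = [[I,0,0],[T g^∧, I, 0],[½T² g^∧, T I, I]]` on `(δφ, δv, δr) ∈ ℝ⁹`. -/
noncomputable def Fmat (g : Fin 3 → ℝ) (T : ℝ) :
    Matrix (Fin 3 ⊕ (Fin 3 ⊕ Fin 3)) (Fin 3 ⊕ (Fin 3 ⊕ Fin 3)) ℝ :=
  fromBlocks 1 0
    (fromRows (T • hat g) (((1 : ℝ) / 2 * T ^ 2) • hat g))
    (fromBlocks 1 0 (T • (1 : Matrix (Fin 3) (Fin 3) ℝ)) 1)

/-- The null-space matrix `N = [[g, 0],[0, 0],[0, I₃]] ∈ ℝ^{9×4}`. -/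
def Nmat (g : Fin 3 → ℝ) : Matrix (Fin 3 ⊕ (Fin 3 ⊕ Fin 3)) (Fin 1 ⊕ Fin 3) ℝ :=
  fromBlocks (Matrix.of fun i (_ : Fin 1) => g i) 0
    0 (fromRows 0 1)

theorem hat_mulVec (a b : Fin 3 → ℝ) : hat a *ᵥ b = a ⨯₃ b := by
  ext i
  fin_cases i <;>
    simp [hat, cross_apply, mulVec, dotProduct, Fin.sum_univ_three] <;> ring

theorem hat_mul_replicateCol_self (ι : Type*) (a : Fin 3 → ℝ) :
    hat a * replicateCol ι a = 0 := by
  rw [← replicateCol_mulVec, hat_mulVec, cross_self, replicateCol_zero]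

theorem FN_eq_N_general (g : Fin 3 → ℝ) (T : ℝ) :
    Fmat g T * Nmat g = Nmat g := by
  have hN : Nmat g = fromBlocks (replicateCol (Fin 1) g) 0 0 (fromRows 0 1) := rfl
  rw [Fmat, hN, fromBlocks_multiply, fromRows_mul, fromBlocks_mul_fromRows]
  simp [Matrix.smul_mul, hat_mul_replicateCol_self]

/-- `F N = N`: the `SE₂(3)` one-step Jacobian maps the null space to itself. -/
theorem FN_eq_N (g : Fin 3 → ℝ) (T : ℝ) (hT : 0 < T) :
    Fmat g T * Nmat g = Nmat g :=
  FN_eq_N_general g T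
end

section
/- For the SE₂(3) parameterization, the product of compounded one-step Jacobians over any number of steps, F_{j-1} F_{j-2} ⋯ F_i with F_k = [[I,0,0],[T_k g^∧, I, 0],[½T_k² g^∧, T_k I, I]], equals [[I,0,0],[Δt g^∧, I, 0],[½ Δt² g^∧, Δt I, I]] where Δt = ∑_{k=i}^{j-1} T_k. -/
open Matrix

lemma Fmat_mul (g : Fin 3 → ℝ) (a b : ℝ) : Fmat g a * Fmat g b = Fmat g (a + b) := by
  simp only [Fmat, fromBlocks_multiply, fromBlocks_mul_fromRows, Matrix.smul_mul,
    Matrix.mul_smul, smul_smul, Matrix.mul_one, Matrix.one_mul, Matrix.mul_zero,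
    Matrix.zero_mul, add_zero, zero_add, one_mul, mul_one]
  ext (i|i|i) (j|j|j) <;>
    simp [fromBlocks, fromRows, Matrix.one_apply, Sum.elim] <;>
      first | (split_ifs <;> ring) | ring

lemma Fmat_zero (g : Fin 3 → ℝ) : Fmat g 0 = 1 := by
  simp [Fmat]

lemma Fmat_prod_range (g : Fin 3 → ℝ) (T : ℕ → ℝ) (i : ℕ) : ∀ n : ℕ,
    ((List.range n).map fun k => Fmat g (T (i + k))).reverse.prod =
      Fmat g (∑ k ∈ Finset.range n, T (i + k)) := by
  intro n
  induction n with
  | zero => simp [Fmat_zero]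
  | succ n ih =>
      rw [List.range_succ, Finset.sum_range_succ]
      simp only [List.map_append, List.reverse_append, List.map_cons, List.map_nil,
        List.reverse_cons, List.reverse_nil, List.nil_append, List.prod_cons]
      rw [List.singleton_append, List.prod_cons, ih, Fmat_mul, add_comm]

/-- The compounded product `F_{j-1} F_{j-2} ⋯ F_i` equals the one-step Jacobian
evaluated with the total step `Δt = ∑_{k=i}^{j-1} T_k`. -/
theorem compounded_jacobian_product (g : Fin 3 → ℝ) (i j : ℕ) (hij : i ≤ j)
    (T : ℕ → ℝ) (hT : ∀ k, 0 < T k) :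
    (((List.range (j - i)).map fun k => Fmat g (T (i + k))).reverse.prod =
      Fmat g (∑ k ∈ Finset.Ico i j, T k)) := by
  rw [Fmat_prod_range, Finset.sum_Ico_eq_sum_range]
end
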